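/- If G = Q_n(X) is a daisy cube, then D_{G,0^n}(x,y) = W_{G,0^n}(x + y), where W_{G,0^n} is the counting polynomial of the number of vertices of G at a given distance from 0^n. -/

import Mathlib

def Qcube (n : ℕ) : SimpleGraph (Fin n → Bool) where
  Adj u v := hammingDist u v = 1
  symm := ⟨fun u v (h : hammingDist u v = 1) => by rwa [hammingDist_comm]⟩
  loopless := ⟨fun u h => by simp [hammingDist_self] at h⟩

def daisySet {n : ℕ} (X : Set (Fin n → Bool)) : Set (Fin n → Bool) :=
  {u | ∃ x ∈ X, u ≤ x}

noncomputable def cubeCount {V : Type*} (G : SimpleGraph V) (k : ℕ) : ℕ :=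
  Set.ncard {S : Set V | Nonempty (G.induce S ≃g Qcube k)}

noncomputable def distToSet {V : Type*} (G : SimpleGraph V) (u : V) (S : Set V) : ℕ :=
  sInf (G.dist u '' S)

noncomputable def distCubeCount {V : Type*} (G : SimpleGraph V) (u : V) (k d : ℕ) : ℕ :=
  Set.ncard {S : Set V | Nonempty (G.induce S ≃g Qcube k) ∧ distToSet G u S = d}

noncomputable def wCount {V : Type*} (G : SimpleGraph V) (u : V) (d : ℕ) : ℕ :=
  Set.ncard {v : V | G.dist u v = d}

def interval {V : Type*} (G : SimpleGraph V) (u v : V) : Set V :=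
  {w | G.dist u v = G.dist u w + G.dist w v}

/-!
The vertex set of a daisy cube is a down-set of `B^n`, so the distance from `0^n` to a vertex
`v` is its weight `|v|`. An injective homomorphism `Q_k → Q_n` is a translate of a coordinate
embedding, because the two ways around every square of `Q_k` must go around a square of `Q_n`;
hence the induced `k`-cubes of the daisy cube are exactly the intervals `[b, t]` of the
coordinatewise order with `|t| = |b| + k` and `t` a vertex, and such an interval lies at distance
`|b|` from `0^n`. Counting the `b ≤ t` of weight `d` gives `c_{k,d} = C(k+d, k) w_{k+d}`, and the
binomial theorem turns `∑ C(k+d, k) w_{k+d} x^k y^d` into `∑ w_m (x + y)^m`.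
-/

open Finset Function

section BoolVectors

variable {ι : Type*}

/- Addition on `Bool` is `xor` (Mathlib's Boolean ring structure), so `ι → Bool` has
characteristic two and `u + Pi.single i 1` flips the coordinate `i` of `u`. -/
lemma Bool.pi_add_self (u : ι → Bool) : u + u = 0 := funext fun i => Bool.xor_self (u i)

lemma Bool.pi_add_eq_zero_iff {u v : ι → Bool} : u + v = 0 ↔ u = v := add_eq_zero_iff_eq_neg

lemma Bool.pi_single_one_injective [DecidableEq ι] :
    Injective (fun i : ι => (Pi.single i 1 : ι → Bool)) :=
  fun i j h => by by_contra hij; simpa [hij] using congrFun h i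

variable [Fintype ι]

lemma hammingDist_eq_hammingNorm_add (u v : ι → Bool) :
    hammingDist u v = hammingNorm (u + v) := by
  rw [hammingDist_eq_hammingNorm]; rfl

lemma hammingNorm_eq_add_hammingDist {b t : ι → Bool} (h : b ≤ t) :
    hammingNorm t = hammingNorm b + hammingDist b t := by
  simp only [hammingNorm, hammingDist, card_filter, ← sum_add_distrib]
  refine sum_congr rfl fun i _ => ?_
  have := h i
  revert this
  cases b i <;> cases t i <;> simp [Bool.zero_eq_false]

lemma hammingNorm_monotone : Monotone (hammingNorm : (ι → Bool) → ℕ) := fun _ _ h =>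
  (hammingNorm_eq_add_hammingDist h).symm ▸ Nat.le_add_right _ _

lemma ncard_le_hammingNorm_eq (t : ι → Bool) (d : ℕ) :
    {b | b ≤ t ∧ hammingNorm b = d}.ncard = (hammingNorm t).choose d := by
  classical
  rw [Set.ncard_eq_toFinset_card', hammingNorm, ← card_powersetCard]
  refine card_nbij' (fun b => ({i | b i ≠ 0} : Finset ι)) (fun s i => decide (i ∈ s))
    ?_ ?_ ?_ ?_
  · intro b hb
    simp only [Set.coe_toFinset, Set.mem_ofPred_eq, mem_coe, mem_powersetCard] at hb ⊢
    refine ⟨fun i hi => ?_, hb.2⟩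
    simp only [mem_filter, mem_univ, true_and, Bool.zero_eq_false, ne_eq,
      Bool.not_eq_false] at hi ⊢
    exact Bool.eq_true_of_true_le (hi ▸ hb.1 i)
  · intro s hs
    simp only [Set.coe_toFinset, Set.mem_ofPred_eq, mem_coe, mem_powersetCard] at hs ⊢
    refine ⟨fun i => ?_, by simp [hammingNorm, Bool.zero_eq_false, ← hs.2]⟩
    by_cases hi : i ∈ s
    · simp [hi, (by simpa [Bool.zero_eq_false] using hs.1 hi : t i = true)]
    · simp [hi]
  · intro b _; funext i; simp [Bool.zero_eq_false]
  · intro s _; ext i; simp [Bool.zero_eq_false]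

lemma ncard_le_pairs_eq_choose_mul {D : Set (ι → Bool)} (k d : ℕ) :
    {p : (ι → Bool) × (ι → Bool) |
        p.1 ≤ p.2 ∧ hammingDist p.1 p.2 = k ∧ p.2 ∈ D ∧ hammingNorm p.1 = d}.ncard
      = (k + d).choose k * {t | t ∈ D ∧ hammingNorm t = k + d}.ncard := by
  classical
  have fiber : ∀ t, {b | b ≤ t ∧ hammingDist b t = k ∧ t ∈ D ∧ hammingNorm b = d}.ncard
      = if t ∈ D ∧ hammingNorm t = k + d then (k + d).choose k else 0 := by
    intro t
    split_ifs with ht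
    · rw [Nat.choose_symm_add, ← ht.2, ← ncard_le_hammingNorm_eq]
      congr 1; ext b
      refine and_congr_right fun hbt => ?_
      have := hammingNorm_eq_add_hammingDist hbt
      simp only [ht.1, true_and]
      omega
    · rw [← Set.ncard_empty (ι → Bool)]
      congr 1
      refine Set.eq_empty_of_forall_notMem fun b ⟨hbt, hk, htD, hb⟩ => ?_
      exact ht ⟨htD, by rw [hammingNorm_eq_add_hammingDist hbt]; omega⟩
  simp only [Set.ncard_eq_toFinset_card', Set.toFinset_ofPred, card_filter,
    Fintype.sum_prod_type_right] at fiber ⊢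
  rw [sum_congr rfl fun t _ => fiber t, ← sum_filter, sum_const, smul_eq_mul, mul_comm,
    card_filter]

variable [DecidableEq ι]

lemma hammingNorm_eq_one_iff {z : ι → Bool} : hammingNorm z = 1 ↔ ∃ i, z = Pi.single i 1 := by
  rw [hammingNorm, card_eq_one]
  refine exists_congr fun i => ⟨fun h => funext fun j => ?_, fun h => ?_⟩
  · have := Finset.ext_iff.mp h j
    by_cases hj : j = i
    · subst hj; simpa [Bool.zero_eq_false, Bool.one_eq_true] using this
    · simpa [hj, Bool.zero_eq_false] using this
  · ext j; by_cases hj : j = i <;> simp [h, hj, Bool.zero_eq_false, Bool.one_eq_true]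

lemma hammingDist_eq_one_iff {u v : ι → Bool} :
    hammingDist u v = 1 ↔ ∃ i, v = u + Pi.single i 1 := by
  rw [hammingDist_eq_hammingNorm_add, hammingNorm_eq_one_iff]
  refine exists_congr fun i => ⟨fun h => ?_, fun h => ?_⟩
  · rw [← h, ← add_assoc, Bool.pi_add_self, zero_add]
  · rw [h, ← add_assoc, Bool.pi_add_self, zero_add]

lemma add_single_induction {P : (ι → Bool) → Prop} (zero : P 0)
    (step : ∀ w i, P w → P (w + Pi.single i 1)) (w : ι → Bool) : P w := by
  rw [← univ_sum_single w]
  induction (univ : Finset ι) using Finset.induction_on with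
  | empty => simpa using zero
  | insert i s hi ih =>
    rw [sum_insert hi, add_comm]
    cases w i
    · simpa [← Bool.zero_eq_false] using ih
    · exact step _ i ih

end BoolVectors

section Subcubes

variable {ι κ : Type*}

lemma Function.extend_add_zero {M : Type*} [AddZeroClass M] (c : κ → ι) (u v : κ → M) :
    extend c (u + v) (0 : ι → M) = extend c u 0 + extend c v 0 :=
  map_add (ExtendByZero.hom M c) u v

lemma Function.Embedding.extend_single [DecidableEq ι] [DecidableEq κ] {M : Type*} [Zero M]
    (c : κ ↪ ι) (i : κ) (m : M) : extend c (Pi.single i m) 0 = Pi.single (c i) m := by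
  funext q
  by_cases hq : ∃ j, c j = q
  · obtain ⟨j, rfl⟩ := hq
    simp [c.injective.extend_apply, Pi.single_apply, c.injective.eq_iff]
  · rw [extend_apply' _ _ _ hq, Pi.single_apply, if_neg (fun h => hq ⟨i, h.symm⟩)]
    rfl

noncomputable def subcubeMap (a : ι → Bool) (c : κ ↪ ι) (w : κ → Bool) : ι → Bool :=
  a + extend c w 0

lemma range_subcubeMap (c : κ ↪ ι) {b : ι → Bool} (hb : ∀ i, b (c i) = 0) :
    Set.range (subcubeMap b c) = Set.Icc b (subcubeMap b c 1) := by
  ext v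
  constructor
  · rintro ⟨w, rfl⟩
    refine ⟨fun q => ?_, fun q => ?_⟩ <;> by_cases hq : ∃ j, c j = q
    · obtain ⟨j, rfl⟩ := hq
      simp [subcubeMap, hb, Bool.zero_eq_false]
    · simp [subcubeMap, extend_apply' _ _ _ hq]
    · obtain ⟨j, rfl⟩ := hq
      simp [subcubeMap, hb, c.injective.extend_apply, Bool.zero_eq_false, Bool.one_eq_true,
        Bool.add_eq_xor]
    · simp [subcubeMap, extend_apply' _ _ _ hq]
  · rintro ⟨hbv, hvt⟩
    refine ⟨v ∘ c, funext fun q => ?_⟩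
    by_cases hq : ∃ j, c j = q
    · obtain ⟨j, rfl⟩ := hq
      simp [subcubeMap, hb, c.injective.extend_apply, Bool.zero_eq_false]
    · have := hvt q
      simp only [subcubeMap, Pi.add_apply, extend_apply' _ _ _ hq, Pi.zero_apply,
        add_zero] at this ⊢
      exact le_antisymm (hbv q) this

variable [Fintype ι] [Fintype κ]

lemma hammingNorm_extend (c : κ ↪ ι) (z : κ → Bool) :
    hammingNorm (extend c z 0) = hammingNorm z := by
  rw [hammingNorm, hammingNorm, ← card_map c]
  congr 1; ext q
  by_cases hq : ∃ j, c j = q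
  · obtain ⟨j, rfl⟩ := hq
    simp [c.injective.extend_apply]
  · simp only [extend_apply' _ _ _ hq, mem_filter, mem_univ, true_and, mem_map]
    exact ⟨fun h => absurd rfl h, fun ⟨j, _, hj⟩ => absurd ⟨j, hj⟩ hq⟩

lemma hammingDist_subcubeMap (a : ι → Bool) (c : κ ↪ ι) (w w' : κ → Bool) :
    hammingDist (subcubeMap a c w) (subcubeMap a c w') = hammingDist w w' := by
  rw [subcubeMap, subcubeMap, hammingDist_eq_hammingNorm_add, hammingDist_eq_hammingNorm_add,
    add_add_add_comm, Bool.pi_add_self, zero_add, ← extend_add_zero, hammingNorm_extend]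

lemma exists_Icc_eq_range_subcubeMap (a : ι → Bool) (c : κ ↪ ι) :
    ∃ b t, b ≤ t ∧ hammingDist b t = Fintype.card κ ∧
      Set.Icc b t = Set.range (subcubeMap a c) := by
  set b := subcubeMap a c (a ∘ c)
  have hb : ∀ i, b (c i) = 0 := fun i => by
    simpa [b, subcubeMap, c.injective.extend_apply] using congrFun (Bool.pi_add_self a) (c i)
  have hshift : subcubeMap a c = subcubeMap b c ∘ Equiv.addRight (a ∘ c) := by
    funext w
    simp only [comp_apply, Equiv.coe_addRight, b, subcubeMap, extend_add_zero]
    rw [add_add_add_comm, Bool.pi_add_self, add_zero]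
  have hrange := range_subcubeMap c hb
  refine ⟨b, subcubeMap b c 1, (hrange ▸ Set.mem_range_self 1 : _ ∈ Set.Icc _ _).1, ?_, ?_⟩
  · have hb0 : subcubeMap b c 0 = b := by rw [subcubeMap, extend_zero, add_zero]
    calc hammingDist b (subcubeMap b c 1)
        = hammingDist (subcubeMap b c 0) (subcubeMap b c 1) := by rw [hb0]
      _ = Fintype.card κ := by
        rw [hammingDist_subcubeMap, hammingDist_zero_left]; simp [hammingNorm]
  · rw [hshift, (Equiv.addRight (a ∘ c)).surjective.range_comp, hrange]

lemma exists_embedding_of_le {b t : ι → Bool} (hbt : b ≤ t) {k : ℕ}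
    (hk : hammingDist b t = k) : ∃ c : Fin k ↪ ι, (∀ i, b (c i) = 0) ∧ t = subcubeMap b c 1 := by
  have hcard : Fintype.card {q // b q ≠ t q} = k := by rw [Fintype.card_subtype]; exact hk
  let c : Fin k ↪ ι := (Fintype.equivFinOfCardEq hcard).symm.toEmbedding.trans
    (Embedding.subtype _)
  have hrange : ∀ q, (∃ j, c j = q) ↔ b q ≠ t q := fun q =>
    ⟨fun ⟨j, hj⟩ => hj ▸ ((Fintype.equivFinOfCardEq hcard).symm j).2,
      fun h => ⟨Fintype.equivFinOfCardEq hcard ⟨q, h⟩, by simp [c]⟩⟩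
  have hfree : ∀ q, b q ≠ t q → b q = 0 ∧ t q = 1 := fun q h => by
    have := hbt q
    revert h this; cases b q <;> cases t q <;> simp [Bool.zero_eq_false, Bool.one_eq_true]
  refine ⟨c, fun i => (hfree _ ((hrange _).mp ⟨i, rfl⟩)).1, funext fun q => ?_⟩
  by_cases hq : ∃ j, c j = q
  · obtain ⟨j, rfl⟩ := hq
    obtain ⟨h0, h1⟩ := hfree _ ((hrange _).mp ⟨j, rfl⟩)
    simp [subcubeMap, h0, h1, c.injective.extend_apply]
  · simp [subcubeMap, extend_apply' _ _ _ hq, not_not.mp (mt (hrange q).mpr hq)]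

end Subcubes

section Rigidity

variable {ι κ : Type*} [DecidableEq ι] [DecidableEq κ]

lemma dir_add_single {ψ : (κ → Bool) → (ι → Bool)} (hψ : Injective ψ)
    {dir : (κ → Bool) → κ → ι}
    (hdir : ∀ w i, ψ (w + Pi.single i 1) = ψ w + Pi.single (dir w i) 1) (w : κ → Bool)
    (i j : κ) : dir (w + Pi.single j 1) i = dir w i := by
  by_cases hij : i = j
  · subst hij
    have h := hdir (w + Pi.single i 1) i
    rw [add_assoc, Bool.pi_add_self, add_zero, hdir, add_assoc, left_eq_add,
      Bool.pi_add_eq_zero_iff] at h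
    exact (Bool.pi_single_one_injective h).symm
  have hdiag : dir w i ≠ dir (w + Pi.single i 1) j := fun h => by
    have hloop : ψ (w + Pi.single i 1 + Pi.single j 1) = ψ w := by
      rw [hdir, hdir, ← h, add_assoc, Bool.pi_add_self, add_zero]
    have := hψ hloop
    rw [add_assoc, add_eq_left, Bool.pi_add_eq_zero_iff] at this
    exact hij (Bool.pi_single_one_injective this)
  have hside : dir w i ≠ dir w j := fun h => by
    have := hψ ((hdir w i).trans (h ▸ (hdir w j).symm))
    exact hij (Bool.pi_single_one_injective (add_left_cancel this))
  -- both ways around the square spanned by `i` and `j` at `w` end at the same vertex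
  have hsquare := hdir (w + Pi.single i 1) j
  rw [add_right_comm, hdir, hdir, hdir, add_assoc, add_assoc] at hsquare
  rcases (Pi.single_add_single_eq_single_add_single one_ne_zero one_ne_zero).mp
    (add_left_cancel hsquare).symm with ⟨h, -⟩ | ⟨-, h, -⟩ | ⟨-, h, -⟩
  · exact absurd h hside
  · exact h.symm
  · exact absurd h hdiag

variable [Fintype ι] [Fintype κ]

lemma exists_embedding_map_add_single {ψ : (κ → Bool) → (ι → Bool)} (hψ : Injective ψ)
    (hadj : ∀ w w', hammingDist w w' = 1 → hammingDist (ψ w) (ψ w') = 1) :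
    ∃ c : κ ↪ ι, ∀ w i, ψ (w + Pi.single i 1) = ψ w + Pi.single (c i) 1 := by
  choose dir hdir using fun w i =>
    hammingDist_eq_one_iff.mp (hadj w (w + Pi.single i 1) (hammingDist_eq_one_iff.mpr ⟨i, rfl⟩))
  have hconst : ∀ w i, dir w i = dir 0 i := fun w i =>
    add_single_induction (P := fun w => dir w i = dir 0 i) rfl
      (fun w j h => (dir_add_single hψ hdir w i j).trans h) w
  refine ⟨⟨dir 0, fun i j h => ?_⟩, fun w i => by rw [hdir, hconst]; rfl⟩
  have := hψ ((hdir 0 i).trans (h ▸ (hdir 0 j).symm))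
  exact Bool.pi_single_one_injective (by simpa using this)

theorem eq_subcubeMap_of_injective {ψ : (κ → Bool) → (ι → Bool)} (hψ : Injective ψ)
    (hadj : ∀ w w', hammingDist w w' = 1 → hammingDist (ψ w) (ψ w') = 1) :
    ∃ c : κ ↪ ι, ψ = subcubeMap (ψ 0) c := by
  obtain ⟨c, hc⟩ := exists_embedding_map_add_single hψ hadj
  refine ⟨c, funext (add_single_induction ?_ fun w i h => ?_)⟩
  · rw [subcubeMap, extend_zero, add_zero]
  · rw [hc, h, subcubeMap, subcubeMap, extend_add_zero, c.extend_single, add_assoc]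

end Rigidity

namespace Qcube

variable {n : ℕ} {D : Set (Fin n → Bool)}

lemma hammingDist_le_length {u v : D} (p : ((Qcube n).induce D).Walk u v) :
    hammingDist u.1 v.1 ≤ p.length := by
  induction p with
  | nil => simp
  | @cons u w v huw p ih =>
    have h1 : hammingDist u.1 w.1 = 1 := huw
    rw [SimpleGraph.Walk.length_cons]
    exact (hammingDist_triangle u.1 w.1 v.1).trans (by omega)

lemma exists_walk_length_eq_hammingNorm (hD : IsLowerSet D) (h0 : 0 ∈ D) (v : D) :
    ∃ p : ((Qcube n).induce D).Walk ⟨0, h0⟩ v, p.length = hammingNorm v.1 := by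
  obtain ⟨v, hv⟩ := v
  induction hm : hammingNorm v generalizing v with
  | zero =>
    obtain rfl := hammingNorm_eq_zero.mp hm
    exact ⟨.nil, rfl⟩
  | succ m ih =>
    obtain ⟨j, hj⟩ : ∃ j, v j ≠ 0 := by
      by_contra! h
      rw [show v = 0 from funext h, hammingNorm_zero] at hm
      exact Nat.succ_ne_zero m hm.symm
    set v' := v + Pi.single j 1
    have hv'v : v' ≤ v := fun q => by
      by_cases hq : q = j
      · subst hq
        simp only [ne_eq, Bool.zero_eq_false, Bool.not_eq_false] at hj
        simp [v', hj, Bool.one_eq_true, Bool.add_eq_xor]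
      · simp [v', hq]
    have hdist : hammingDist v' v = 1 :=
      hammingDist_eq_one_iff.mpr ⟨j, by rw [add_assoc, Bool.pi_add_self, add_zero]⟩
    have hadj : ((Qcube n).induce D).Adj ⟨v', hD hv'v hv⟩ ⟨v, hv⟩ := hdist
    obtain ⟨p, hp⟩ := ih v' (hD hv'v hv) (by have := hammingNorm_eq_add_hammingDist hv'v; omega)
    exact ⟨p.concat hadj, (p.length_concat hadj).trans (congrArg (· + 1) hp)⟩

lemma dist_eq_hammingNorm (hD : IsLowerSet D) (h0 : 0 ∈ D) (v : D) :
    ((Qcube n).induce D).dist ⟨0, h0⟩ v = hammingNorm v.1 := by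
  obtain ⟨p, hp⟩ := exists_walk_length_eq_hammingNorm hD h0 v
  refine le_antisymm (hp ▸ SimpleGraph.dist_le p) ?_
  obtain ⟨q, hq⟩ := SimpleGraph.Reachable.exists_walk_length_eq_dist ⟨p⟩
  rw [← hq, ← hammingDist_zero_left]
  exact hammingDist_le_length q

lemma distToSet_preimage_Icc (hD : IsLowerSet D) (h0 : 0 ∈ D) {b t : Fin n → Bool}
    (hbt : b ≤ t) (ht : t ∈ D) :
    distToSet ((Qcube n).induce D) ⟨0, h0⟩ (Subtype.val ⁻¹' Set.Icc b t) = hammingNorm b := by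
  have hb : (⟨b, hD hbt ht⟩ : D) ∈ Subtype.val ⁻¹' Set.Icc b t := ⟨le_rfl, hbt⟩
  refine le_antisymm (Nat.sInf_le ⟨_, hb, dist_eq_hammingNorm hD h0 _⟩)
    (le_csInf ⟨_, Set.mem_image_of_mem _ hb⟩ ?_)
  rintro _ ⟨u, hu, rfl⟩
  rw [dist_eq_hammingNorm hD h0]
  exact hammingNorm_monotone hu.1

lemma wCount_eq_ncard (hD : IsLowerSet D) (h0 : 0 ∈ D) (m : ℕ) :
    wCount ((Qcube n).induce D) ⟨0, h0⟩ m = {t | t ∈ D ∧ hammingNorm t = m}.ncard := by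
  rw [wCount, ← Set.ncard_image_of_injective _ Subtype.val_injective]
  congr 1
  ext t
  simp [dist_eq_hammingNorm hD h0, and_comm]

theorem nonempty_induce_iso_iff {k : ℕ} (S : Set D) :
    Nonempty (((Qcube n).induce D).induce S ≃g Qcube k) ↔
      ∃ b t, b ≤ t ∧ hammingDist b t = k ∧ Set.Icc b t ⊆ D ∧
        S = Subtype.val ⁻¹' Set.Icc b t := by
  constructor
  · rintro ⟨e⟩
    set ψ : (Fin k → Bool) → (Fin n → Bool) := fun w => (e.symm w).1.1
    have hψ : Injective ψ := fun w w' h => e.symm.injective (Subtype.ext (Subtype.ext h))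
    have hadj : ∀ w w', hammingDist w w' = 1 → hammingDist (ψ w) (ψ w') = 1 :=
      fun w w' h => e.symm.map_adj_iff.mpr h
    obtain ⟨c, hc⟩ := eq_subcubeMap_of_injective hψ hadj
    obtain ⟨b, t, hbt, hk, hrange⟩ := exists_Icc_eq_range_subcubeMap (ψ 0) c
    rw [← hc] at hrange
    refine ⟨b, t, hbt, by simpa using hk, ?_, ?_⟩
    · rw [hrange]; rintro _ ⟨w, rfl⟩; exact (e.symm w).1.2
    · ext s
      rw [Set.mem_preimage, hrange]
      exact ⟨fun hs => ⟨e ⟨s, hs⟩, congrArg (fun x => x.1.1) (e.symm_apply_apply ⟨s, hs⟩)⟩,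
        fun ⟨w, hw⟩ => Subtype.ext hw ▸ (e.symm w).2⟩
  · rintro ⟨b, t, hbt, hk, hD, rfl⟩
    obtain ⟨c, hb, rfl⟩ := exists_embedding_of_le hbt hk
    have hrange := range_subcubeMap c hb
    have hmem : ∀ w, subcubeMap b c w ∈ Set.Icc b (subcubeMap b c 1) :=
      fun w => hrange ▸ Set.mem_range_self w
    let f : (Fin k → Bool) → Subtype.val ⁻¹' Set.Icc b (subcubeMap b c 1) :=
      fun w => ⟨⟨subcubeMap b c w, hD (hmem w)⟩, hmem w⟩
    have hf : Bijective f := by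
      refine ⟨fun w w' h => ?_, fun ⟨⟨v, _⟩, hv⟩ => ?_⟩
      · have : subcubeMap b c w = subcubeMap b c w' := congrArg (fun s => s.1.1) h
        rw [← hammingDist_eq_zero, ← hammingDist_subcubeMap b c, this, hammingDist_self]
      · obtain ⟨w, hw⟩ := (hrange.symm ▸ hv : v ∈ Set.range (subcubeMap b c))
        exact ⟨w, Subtype.ext (Subtype.ext hw)⟩
    refine ⟨RelIso.symm ⟨Equiv.ofBijective f hf, fun {w w'} => ?_⟩⟩
    show hammingDist (subcubeMap b c w) (subcubeMap b c w') = 1 ↔ hammingDist w w' = 1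
    rw [hammingDist_subcubeMap]

lemma injOn_preimage_Icc :
    Set.InjOn
      (fun p : (Fin n → Bool) × (Fin n → Bool) => (Subtype.val ⁻¹' Set.Icc p.1 p.2 : Set D))
      {p | p.1 ≤ p.2 ∧ Set.Icc p.1 p.2 ⊆ D} := by
  rintro ⟨b, t⟩ ⟨hbt, hbtD⟩ ⟨b', t'⟩ ⟨-, hbtD'⟩ h
  have := Subtype.preimage_coe_eq_preimage_coe_iff.mp h
  rw [Set.inter_eq_right.mpr hbtD, Set.inter_eq_right.mpr hbtD'] at this
  exact Prod.ext_iff.mpr ((Set.Icc_eq_Icc_iff hbt).mp this)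

theorem distCubeCount_eq (hD : IsLowerSet D) (h0 : 0 ∈ D) (k d : ℕ) :
    distCubeCount ((Qcube n).induce D) ⟨0, h0⟩ k d
      = (k + d).choose k * wCount ((Qcube n).induce D) ⟨0, h0⟩ (k + d) := by
  have hcubes : {S : Set D | Nonempty (((Qcube n).induce D).induce S ≃g Qcube k) ∧
      distToSet ((Qcube n).induce D) ⟨0, h0⟩ S = d} =
      (fun p => Subtype.val ⁻¹' Set.Icc p.1 p.2) '' {p : (Fin n → Bool) × (Fin n → Bool) |
        p.1 ≤ p.2 ∧ hammingDist p.1 p.2 = k ∧ p.2 ∈ D ∧ hammingNorm p.1 = d} := by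
    ext S
    simp only [Set.mem_ofPred_eq, nonempty_induce_iso_iff, Set.mem_image, Prod.exists]
    constructor
    · rintro ⟨⟨b, t, hbt, hk, hbtD, rfl⟩, hd⟩
      have ht := hbtD ⟨hbt, le_rfl⟩
      exact ⟨b, t, ⟨hbt, hk, ht, distToSet_preimage_Icc hD h0 hbt ht ▸ hd⟩, rfl⟩
    · rintro ⟨b, t, ⟨hbt, hk, ht, hd⟩, rfl⟩
      exact ⟨⟨b, t, hbt, hk, fun v hv => hD hv.2 ht, rfl⟩,
        (distToSet_preimage_Icc hD h0 hbt ht).trans hd⟩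
  rw [distCubeCount, hcubes, (injOn_preimage_Icc.mono ?_).ncard_image,
    ncard_le_pairs_eq_choose_mul, wCount_eq_ncard hD h0]
  rintro ⟨b, t⟩ ⟨hbt, -, ht, -⟩
  exact ⟨hbt, fun v hv => hD hv.2 ht⟩

lemma wCount_eq_zero_of_lt (hD : IsLowerSet D) (h0 : 0 ∈ D) {m : ℕ} (hm : n < m) :
    wCount ((Qcube n).induce D) ⟨0, h0⟩ m = 0 := by
  rw [wCount_eq_ncard hD h0, ← Set.ncard_empty (Fin n → Bool)]
  congr 1
  refine Set.eq_empty_of_forall_notMem fun t ⟨_, ht⟩ => ?_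
  have := hammingNorm_le_card_fintype (x := t)
  rw [Fintype.card_fin] at this
  omega

end Qcube

lemma sum_range_sum_range_choose_eq_sum_add_pow {R : Type*} [CommSemiring R] (W : ℕ → R) {N : ℕ}
    (hW : ∀ m, N < m → W m = 0) (x y : R) :
    ∑ k ∈ range (N + 1), ∑ d ∈ range (N + 1), (k + d).choose k * W (k + d) * x ^ k * y ^ d
      = ∑ m ∈ range (N + 1), W m * (x + y) ^ m := by
  have hexpand : ∀ m, W m * (x + y) ^ m = ∑ p ∈ antidiagonal m,
      ((p.1 + p.2).choose p.1 * W (p.1 + p.2) * x ^ p.1 * y ^ p.2 : R) := by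
    intro m
    rw [(Commute.all x y).add_pow', mul_sum]
    refine sum_congr rfl fun p hp => ?_
    rw [mem_antidiagonal.mp hp, nsmul_eq_mul]
    ring
  simp_rw [hexpand]
  rw [← sum_product', sum_sigma']
  symm
  refine sum_of_injOn Sigma.snd ?_ ?_ ?_ ?_
  · rintro ⟨m, p⟩ hp ⟨m', p'⟩ hp' (h : p = p')
    simp only [coe_sigma, Set.mem_sigma_iff, mem_coe, HasAntidiagonal.mem_antidiagonal] at hp hp'
    subst h
    rw [← hp.2, ← hp'.2]
  · rintro ⟨m, p⟩ hp
    simp only [coe_sigma, Set.mem_sigma_iff, mem_coe, HasAntidiagonal.mem_antidiagonal,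
      mem_range] at hp
    simp only [coe_product, Set.mem_prod, mem_coe, mem_range]
    omega
  · rintro ⟨k, d⟩ - hkd
    rw [hW (k + d), mul_zero, zero_mul, zero_mul]
    by_contra hle
    exact hkd ⟨⟨k + d, (k, d)⟩, by simp; omega, rfl⟩
  · rintro ⟨m, p⟩ -
    rfl

theorem distCubePolynomial_of_daisy_cube_eq_W (n : ℕ)
    (X : Set (Fin n → Bool)) (h0 : (fun _ => false) ∈ daisySet X) (x y : ℝ) :
    ∑ k ∈ Finset.range (2 ^ n + 1), ∑ d ∈ Finset.range (2 ^ n + 1),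
      (distCubeCount ((Qcube n).induce (daisySet X)) ⟨fun _ => false, h0⟩ k d : ℝ)
        * x ^ k * y ^ d =
    ∑ d ∈ Finset.range (2 ^ n + 1),
      (wCount ((Qcube n).induce (daisySet X)) ⟨fun _ => false, h0⟩ d : ℝ) * (x + y) ^ d := by
  have hD : IsLowerSet (daisySet X) := fun _ _ hle ⟨z, hz, hbz⟩ => ⟨z, hz, hle.trans hbz⟩
  have hu : (⟨fun _ => false, h0⟩ : daisySet X) = ⟨0, h0⟩ := rfl
  rw [hu]
  simp_rw [Qcube.distCubeCount_eq hD h0, Nat.cast_mul]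
  exact sum_range_sum_range_choose_eq_sum_add_pow
    (fun m => (wCount ((Qcube n).induce (daisySet X)) ⟨0, h0⟩ m : ℝ))
    (fun m hm => by
      rw [Qcube.wCount_eq_zero_of_lt hD h0 (Nat.lt_two_pow_self.trans hm), Nat.cast_zero]) x y
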